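/- Let N ≥ 1, X a real normed space, C ⊆ X a convex subset, T_1,…,T_N : C → C nonexpansive mappings extended cyclically by T_n := T_{((n−1) mod N)+1}, (λ_n)_{n≥1} a sequence in [0,1], u ∈ C, and let (x_n) be the cyclic Halpern iteration: x_0 = u, x_{n+1} = λ_{n+1}·u + (1 − λ_{n+1})·T_{n+1}x_n. Let M > 0 with ‖x_n − u‖ ≤ M for all n ≥ 1 and ‖u − T_i u‖ ≤ M for each i = 1,…,N. Assume θ : ℤ₊ → ℤ₊ is a rate of divergence for ∑_{n≥1} λ_n (i.e. ∑_{n=1}^{θ(m)} λ_n ≥ m for all m) and γ : (0,∞) → ℤ₊ is a Cauchy modulus for ∑_{n≥1} |λ_{n+N} − λ_n| (i.e. for all ε > 0 and m ≥ 1, ∑_{n=γ(ε)+1}^{γ(ε)+m} |λ_{n+N} − λ_n| ≤ ε). Then ‖x_n − x_{n+N}‖ → 0 with rate of convergence Φ̃(ε) = θ(γ(ε/(4M)) + max{⌈ln(4M/ε)⌉, 1}), i.e. ‖x_n − x_{n+N}‖ ≤ ε for all ε > 0 and all n ≥ Φ̃(ε). -/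

import Mathlib

/-!
With `a n = ‖x (n + N) - x n‖`, the `N`-periodicity of `T` and nonexpansiveness give the
recursive inequality `a (n+1) ≤ (1 - λ_{n+1}) a n + 2M |λ_{n+1+N} - λ_{n+1}|`. Unrolling it from
`n₀ = γ (ε / 4M)` bounds `a n` by `2M exp (-∑_{n₀ < k ≤ n} λ_k)` plus `2M` times a tail of the
series `∑ |λ_{k+N} - λ_k|`. The tail is at most `ε / 4M` by the choice of `n₀`, and once
`n ≥ θ (n₀ + K)` with `K ≥ ln (4M / ε)` the `λ`-sum over `(n₀, n]` is at least `K`, since the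
first `n₀` terms contribute at most `n₀`.
-/

open Finset

def IsRateOfDivergence (lam : ℕ → ℝ) (θ : ℕ → ℕ) : Prop :=
  ∀ m : ℕ, 1 ≤ m → (m : ℝ) ≤ ∑ n ∈ Icc 1 (θ m), lam n

def IsCauchyModulus (c : ℕ → ℝ) (γ : ℝ → ℕ) : Prop :=
  ∀ ε : ℝ, 0 < ε → ∀ m, 1 ≤ m → ∑ n ∈ Icc (γ ε + 1) (γ ε + m), c n ≤ ε

theorem prod_one_sub_le_exp_neg_sum {ι : Type*} (s : Finset ι) {t : ι → ℝ}
    (ht : ∀ i ∈ s, t i ≤ 1) : ∏ i ∈ s, (1 - t i) ≤ Real.exp (-∑ i ∈ s, t i) := by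
  rw [← sum_neg_distrib, Real.exp_sum]
  exact prod_le_prod (fun i hi => sub_nonneg.2 (ht i hi)) fun i _ => Real.one_sub_le_exp_neg _

theorem le_prod_mul_add_sum_of_le_one_sub_mul_add {a t b : ℕ → ℝ}
    (ht : ∀ n, t (n + 1) ∈ Set.Icc 0 1) (hb : ∀ n, 0 ≤ b n)
    (hrec : ∀ n, a (n + 1) ≤ (1 - t (n + 1)) * a n + b (n + 1)) {n₀ : ℕ} :
    ∀ n, n₀ ≤ n → a n ≤ (∏ k ∈ Ioc n₀ n, (1 - t k)) * a n₀ + ∑ k ∈ Ioc n₀ n, b k := by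
  refine Nat.le_induction (by simp) fun n hn ih => ?_
  obtain ⟨ht0, ht1⟩ := ht n
  have hS : 0 ≤ ∑ k ∈ Ioc n₀ n, b k := sum_nonneg fun k _ => hb k
  rw [prod_Ioc_succ_top hn, sum_Ioc_succ_top hn]
  calc a (n + 1) ≤ (1 - t (n + 1)) * a n + b (n + 1) := hrec n
    _ ≤ (1 - t (n + 1)) * ((∏ k ∈ Ioc n₀ n, (1 - t k)) * a n₀ + ∑ k ∈ Ioc n₀ n, b k)
        + b (n + 1) := by gcongr
    _ ≤ _ := by nlinarith

theorem sum_Ioc_zero_le_of_le_one {lam : ℕ → ℝ} (hle : ∀ n, 1 ≤ n → lam n ≤ 1) (p : ℕ) :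
    ∑ k ∈ Ioc 0 p, lam k ≤ p := by
  simpa using sum_le_card_nsmul (Ioc 0 p) lam 1 fun k hk => hle k (mem_Ioc.1 hk).1

namespace IsRateOfDivergence

variable {lam : ℕ → ℝ} {θ : ℕ → ℕ}

theorem sum_Ioc_zero (h : IsRateOfDivergence lam θ) {m : ℕ} (hm : 1 ≤ m) :
    (m : ℝ) ≤ ∑ k ∈ Ioc 0 (θ m), lam k := by
  simpa [← Icc_add_one_left_eq_Ioc] using h m hm

theorem le_apply (h : IsRateOfDivergence lam θ) (hle : ∀ n, 1 ≤ n → lam n ≤ 1) {m : ℕ}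
    (hm : 1 ≤ m) : m ≤ θ m := by
  exact_mod_cast (h.sum_Ioc_zero hm).trans (sum_Ioc_zero_le_of_le_one hle _)

theorem le_sum_Ioc (h : IsRateOfDivergence lam θ) (hlam : ∀ n, 1 ≤ n → lam n ∈ Set.Icc 0 1)
    {n₀ K n : ℕ} (hK : 1 ≤ K) (hn : θ (n₀ + K) ≤ n) : (K : ℝ) ≤ ∑ k ∈ Ioc n₀ n, lam k := by
  have hle : ∀ k, 1 ≤ k → lam k ≤ 1 := fun k hk => (hlam k hk).2
  have hn₀ : n₀ ≤ n := by linarith [h.le_apply hle (m := n₀ + K) (by omega)]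
  have hθn : ∑ k ∈ Ioc 0 (θ (n₀ + K)), lam k ≤ ∑ k ∈ Ioc 0 n, lam k :=
    sum_le_sum_of_subset_of_nonneg (Ioc_subset_Ioc_right hn) fun k hk _ =>
      (hlam k (mem_Ioc.1 hk).1).1
  have hθK := h.sum_Ioc_zero (m := n₀ + K) (by omega)
  rw [← sum_Ioc_consecutive _ (Nat.zero_le n₀) hn₀] at hθn
  push_cast at hθK
  linarith [sum_Ioc_zero_le_of_le_one hle n₀]

end IsRateOfDivergence

theorem IsCauchyModulus.sum_Ioc_le {c : ℕ → ℝ} {γ : ℝ → ℕ} (h : IsCauchyModulus c γ)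
    {ε : ℝ} (hε : 0 < ε) {n : ℕ} (hn : γ ε < n) : ∑ k ∈ Ioc (γ ε) n, c k ≤ ε := by
  obtain ⟨m, rfl⟩ := Nat.exists_eq_add_of_lt hn
  simpa [Icc_add_one_left_eq_Ioc, add_assoc] using h ε hε (m + 1) le_add_self

theorem le_of_le_one_sub_mul_add_of_rates {a lam c : ℕ → ℝ} {D : ℝ} (hD : 0 < D)
    (ha : ∀ n, 0 ≤ a n) (haD : ∀ n, a n ≤ D) (hlam : ∀ n, 1 ≤ n → lam n ∈ Set.Icc 0 1)
    (hc : ∀ n, 0 ≤ c n) (hrec : ∀ n, a (n + 1) ≤ (1 - lam (n + 1)) * a n + D * c (n + 1))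
    {θ : ℕ → ℕ} (hθ : IsRateOfDivergence lam θ) {γ : ℝ → ℕ} (hγ : IsCauchyModulus c γ)
    {ε : ℝ} (hε : 0 < ε) {n : ℕ}
    (hn : θ (γ (ε / (2 * D)) + max ⌈Real.log (2 * D / ε)⌉₊ 1) ≤ n) : a n ≤ ε := by
  set n₀ := γ (ε / (2 * D))
  set K := max ⌈Real.log (2 * D / ε)⌉₊ 1
  have hK : 1 ≤ K := le_max_right _ _
  have hn₀ : n₀ + K ≤ n := (hθ.le_apply (fun n hn => (hlam n hn).2) (by omega)).trans hn
  have hlamK : (K : ℝ) ≤ ∑ k ∈ Ioc n₀ n, lam k := hθ.le_sum_Ioc hlam hK hn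
  have hexp : Real.exp (-K) ≤ ε / (2 * D) := by
    have hlogK : Real.log (2 * D / ε) ≤ K :=
      (Nat.le_ceil _).trans (by exact_mod_cast le_max_left _ _)
    calc Real.exp (-K) ≤ Real.exp (-Real.log (2 * D / ε)) := by gcongr
      _ = ε / (2 * D) := by rw [Real.exp_neg, Real.exp_log (by positivity), inv_div]
  have hsum := hγ.sum_Ioc_le (by positivity : 0 < ε / (2 * D)) (by omega : n₀ < n)
  calc a n ≤ (∏ k ∈ Ioc n₀ n, (1 - lam k)) * a n₀ + ∑ k ∈ Ioc n₀ n, D * c k :=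
        le_prod_mul_add_sum_of_le_one_sub_mul_add (fun n => hlam (n + 1) le_add_self)
          (fun n => mul_nonneg hD.le (hc n)) hrec n (by omega)
    _ ≤ Real.exp (-K) * D + D * (ε / (2 * D)) := by
        rw [← mul_sum]
        gcongr
        · exact ha n₀
        · calc ∏ k ∈ Ioc n₀ n, (1 - lam k) ≤ Real.exp (-∑ k ∈ Ioc n₀ n, lam k) :=
                prod_one_sub_le_exp_neg_sum _ fun k hk =>
                  (hlam k (Nat.one_le_of_lt (mem_Ioc.1 hk).1)).2
            _ ≤ Real.exp (-K) := by gcongr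
        · exact haD n₀
    _ ≤ ε / (2 * D) * D + D * (ε / (2 * D)) := by gcongr
    _ = ε := by field_simp; ring

section Halpern

variable {X : Type*} [NormedAddCommGroup X] [NormedSpace ℝ X]

theorem norm_halpern_step_sub_le {S : X → X} {u y z : X} {α β : ℝ} (hβ : β ≤ 1)
    (hS : ‖S y - S z‖ ≤ ‖y - z‖) :
    ‖(α • u + (1 - α) • S y) - (β • u + (1 - β) • S z)‖
      ≤ |α - β| * ‖u - S y‖ + (1 - β) * ‖y - z‖ := by
  have hsplit : (α • u + (1 - α) • S y) - (β • u + (1 - β) • S z)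
      = (α - β) • (u - S y) + (1 - β) • (S y - S z) := by module
  calc _ ≤ ‖(α - β) • (u - S y)‖ + ‖(1 - β) • (S y - S z)‖ := hsplit ▸ norm_add_le _ _
    _ = |α - β| * ‖u - S y‖ + (1 - β) * ‖S y - S z‖ := by
        rw [norm_smul, norm_smul, Real.norm_eq_abs, Real.norm_eq_abs,
          abs_of_nonneg (sub_nonneg.2 hβ)]
    _ ≤ _ := by gcongr

theorem halpern_mem {C : Set X} (hC : Convex ℝ C) {T : ℕ → X → X}
    (hT : ∀ n, Set.MapsTo (T (n + 1)) C C) {lam : ℕ → ℝ} (hlam : ∀ n, lam (n + 1) ∈ Set.Icc 0 1)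
    {u : X} (hu : u ∈ C) {x : ℕ → X} (hx0 : x 0 ∈ C)
    (hx : ∀ n, x (n + 1) = lam (n + 1) • u + (1 - lam (n + 1)) • T (n + 1) (x n)) :
    ∀ n, x n ∈ C
  | 0 => hx0
  | n + 1 => hx n ▸ hC hu (hT n (halpern_mem hC hT hlam hu hx0 hx n)) (hlam n).1
      (sub_nonneg.2 (hlam n).2) (add_sub_cancel _ _)

end Halpern

section Cyclic

variable {α : Type*} {N : ℕ} {T : ℕ → α}

theorem forall_of_cyclic (hN : 1 ≤ N) (hcyc : ∀ n, 1 ≤ n → T n = T ((n - 1) % N + 1))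
    {P : α → Prop} (hP : ∀ i, 1 ≤ i → i ≤ N → P (T i)) (n : ℕ) (hn : 1 ≤ n) : P (T n) :=
  hcyc n hn ▸ hP _ le_add_self (Nat.mod_lt _ hN)

theorem cyclic_add_period (hcyc : ∀ n, 1 ≤ n → T n = T ((n - 1) % N + 1)) {n : ℕ}
    (hn : 1 ≤ n) : T (n + N) = T n := by
  rw [hcyc n hn, hcyc (n + N) (by omega), Nat.sub_add_comm hn, Nat.add_mod_right]

end Cyclic

/-- Rate of convergence of `‖x n - x (n+N)‖ → 0` for the cyclic Halpern iteration
`x 0 = u`, `x (n+1) = λ_{n+1} • u + (1 - λ_{n+1}) • T_{n+1} (x n)`. -/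
theorem stmt_1 {X : Type*} [NormedAddCommGroup X] [NormedSpace ℝ X]
    (N : ℕ) (hN : 1 ≤ N) (C : Set X) (hC : Convex ℝ C)
    (T : ℕ → X → X)
    (hTmap : ∀ i, 1 ≤ i → i ≤ N → Set.MapsTo (T i) C C)
    (hTne : ∀ i, 1 ≤ i → i ≤ N → ∀ x ∈ C, ∀ y ∈ C, ‖T i x - T i y‖ ≤ ‖x - y‖)
    (hcyc : ∀ n, 1 ≤ n → T n = T ((n - 1) % N + 1))
    (lam : ℕ → ℝ) (hlam : ∀ n, 1 ≤ n → lam n ∈ Set.Icc (0 : ℝ) 1)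
    (u : X) (hu : u ∈ C) (x : ℕ → X) (hx0 : x 0 = u)
    (hx : ∀ n : ℕ, x (n + 1) = lam (n + 1) • u + (1 - lam (n + 1)) • T (n + 1) (x n))
    (M : ℝ) (hM : 0 < M)
    (hxb : ∀ n, 1 ≤ n → ‖x n - u‖ ≤ M)
    (hTu : ∀ i, 1 ≤ i → i ≤ N → ‖u - T i u‖ ≤ M)
    (θ : ℕ → ℕ)
    (hθ : ∀ m : ℕ, 1 ≤ m → (m : ℝ) ≤ ∑ n ∈ Finset.Icc 1 (θ m), lam n)
    (γ : ℝ → ℕ)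
    (hγ : ∀ ε : ℝ, 0 < ε → ∀ m, 1 ≤ m →
      ∑ n ∈ Finset.Icc (γ ε + 1) (γ ε + m), |lam (n + N) - lam n| ≤ ε) :
    ∀ ε : ℝ, 0 < ε → ∀ n : ℕ,
      θ (γ (ε / (4 * M)) + max ⌈Real.log (4 * M / ε)⌉₊ 1) ≤ n →
      ‖x n - x (n + N)‖ ≤ ε := by
  have hTn := forall_of_cyclic hN hcyc
    (P := fun S => Set.MapsTo S C C ∧ (∀ y ∈ C, ∀ z ∈ C, ‖S y - S z‖ ≤ ‖y - z‖) ∧ ‖u - S u‖ ≤ M)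
    fun i h1 h2 => ⟨hTmap i h1 h2, hTne i h1 h2, hTu i h1 h2⟩
  have hxC := halpern_mem hC (fun n => (hTn (n + 1) le_add_self).1)
    (fun n => hlam (n + 1) le_add_self) hu (hx0 ▸ hu) hx
  have hxu : ∀ n, ‖x n - u‖ ≤ M := fun n =>
    n.eq_zero_or_pos.elim (fun h => by simpa [h, hx0] using hM.le) (hxb n)
  have hdist : ∀ m n, ‖x m - x n‖ ≤ 2 * M := fun m n => by
    linarith [norm_sub_le_norm_sub_add_norm_sub (x m) u (x n), hxu m, norm_sub_rev u (x n), hxu n]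
  have hrec : ∀ n, ‖x (n + 1 + N) - x (n + 1)‖
      ≤ (1 - lam (n + 1)) * ‖x (n + N) - x n‖ + 2 * M * |lam (n + 1 + N) - lam (n + 1)| := by
    intro n
    obtain ⟨-, hne, hTuM⟩ := hTn (n + 1) le_add_self
    have hTx : ‖u - T (n + 1) (x (n + N))‖ ≤ 2 * M := by
      linarith [norm_sub_le_norm_sub_add_norm_sub u (T (n + 1) u) (T (n + 1) (x (n + N))),
        hne u hu _ (hxC (n + N)), norm_sub_rev u (x (n + N)), hxu (n + N)]
    have hper : T (n + N + 1) = T (n + 1) :=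
      add_right_comm n N 1 ▸ cyclic_add_period hcyc le_add_self
    rw [add_right_comm, hx, hx, hper]
    calc _ ≤ _ :=
          norm_halpern_step_sub_le (hlam (n + 1) le_add_self).2 (hne _ (hxC _) _ (hxC n))
      _ ≤ _ := by rw [add_comm, mul_comm (2 * M)]; gcongr
  intro ε hε n hn
  rw [norm_sub_rev]
  refine le_of_le_one_sub_mul_add_of_rates (a := fun n => ‖x (n + N) - x n‖)
    (by positivity : 0 < 2 * M) (fun n => norm_nonneg _) (fun n => hdist _ _) hlam
    (fun n => abs_nonneg _) hrec hθ hγ hε ?_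
  rwa [← mul_assoc, show (2 : ℝ) * 2 = 4 by norm_num]
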